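/- arXiv:1202.1461 — 2 statements merged into one kernel-verified Lean document; each statement's English description precedes it below -/
import Mathlib

section
/- Let (Ω,Σ,μ) be a σ-finite measure space with the finite subset property, X a separable Banach space, and M: Ω → L(X) a map such that s ↦ M(s)x is Bochner measurable for every x ∈ X. Then the induced multiplication operator 𝓜 on L^p(Ω,X) (1 ≤ p ≤ ∞), defined by (𝓜f)(s) = M(s)f(s), is bounded if and only if the function s ↦ ‖M(s)‖ is essentially bounded, and in that case ‖𝓜‖ = ess sup_{s∈Ω} ‖M(s)‖. -/
/-!
The bound `‖𝓜‖ ≤ ess sup ‖M(s)‖` holds pointwise. Conversely, if `‖M(s)‖ > c` on a set of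
positive measure, then, testing `M(s)` against a countable dense subset of `X`, a single vector
`x` satisfies `‖M(s) x‖ > c ‖x‖` on a set of positive measure; the finite subset property
shrinks it to a set `Z` of finite positive measure, and the test function `1_Z x ∈ L^p` shows
`‖𝓜‖ ≥ c`.
-/

open MeasureTheory Filter Topology ENNReal

theorem ContinuousLinearMap.exists_mem_mul_norm_lt_of_lt_opNorm {𝕜 E F : Type*}
    [NontriviallyNormedField 𝕜] [NormedAddCommGroup E] [NormedSpace 𝕜 E] [NormedAddCommGroup F]
    [NormedSpace 𝕜 F] {D : Set E} (hD : Dense D)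
    (T : E →L[𝕜] F) {c : ℝ} (hc : 0 ≤ c) (hcT : c < ‖T‖) : ∃ x ∈ D, c * ‖x‖ < ‖T x‖ := by
  obtain ⟨x, hx⟩ := T.exists_mul_lt_of_lt_opNorm hc hcT
  have hopen : IsOpen {x : E | c * ‖x‖ < ‖T x‖} :=
    isOpen_lt (continuous_const.mul continuous_norm) T.continuous.norm
  exact hD.exists_mem_open hopen ⟨x, hx⟩

namespace MeasureTheory

variable {Ω 𝕜 E F : Type*} [MeasurableSpace Ω] [NontriviallyNormedField 𝕜]
  [NormedAddCommGroup E] [NormedSpace 𝕜 E] [NormedAddCommGroup F] [NormedSpace 𝕜 F]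
  {M : Ω → E →L[𝕜] F}

theorem StronglyMeasurable.clm_apply_of_forall [TopologicalSpace.SeparableSpace E]
    (hM : ∀ x, StronglyMeasurable fun s => M s x) {f : Ω → E} (hf : StronglyMeasurable f) :
    StronglyMeasurable fun s => M s (f s) := by
  borelize E
  have hM_uncurry : StronglyMeasurable (Function.uncurry fun x s => M s x) :=
    stronglyMeasurable_uncurry_of_continuous_of_stronglyMeasurable
      (fun s => (M s).continuous) hM
  exact hM_uncurry.comp_measurable (hf.measurable.prodMk measurable_id)

variable {μ : Measure Ω}

theorem AEStronglyMeasurable.clm_apply_of_forall [TopologicalSpace.SeparableSpace E]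
    (hM : ∀ x, StronglyMeasurable fun s => M s x) {f : Ω → E} (hf : AEStronglyMeasurable f μ) :
    AEStronglyMeasurable (fun s => M s (f s)) μ :=
  ⟨_, hf.stronglyMeasurable_mk.clm_apply_of_forall hM,
    hf.ae_eq_mk.mono fun s hs => by simp only [hs]⟩

theorem ae_norm_clm_apply_le {C : ℝ} (hC : ∀ᵐ s ∂μ, ‖M s‖ ≤ C) (f : Ω → E) :
    ∀ᵐ s ∂μ, ‖M s (f s)‖ ≤ C * ‖f s‖ :=
  hC.mono fun s hs => (M s).le_of_opNorm_le hs (f s)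

theorem Lp.mul_norm_le_of_ae_mul_le {p : ℝ≥0∞} {f : Lp E p μ} {g : Lp F p μ} {c : ℝ}
    (hc : 0 ≤ c) (h : ∀ᵐ s ∂μ, c * ‖f s‖ ≤ ‖g s‖) : c * ‖f‖ ≤ ‖g‖ := by
  rcases hc.eq_or_lt with rfl | hc
  · rw [zero_mul, Lp.norm_def]
    exact ENNReal.toReal_nonneg
  rw [← le_inv_mul_iff₀ hc]
  exact Lp.norm_le_mul_norm_of_ae_le_mul (h.mono fun s hs => (le_inv_mul_iff₀ hc).2 hs)

theorem exists_measure_mul_norm_lt_norm_apply_ne_zero [TopologicalSpace.SeparableSpace E]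
    {c : ℝ} (hc : 0 ≤ c) (hM : μ {s | c < ‖M s‖} ≠ 0) :
    ∃ x, μ {s | c * ‖x‖ < ‖M s x‖} ≠ 0 := by
  have : Nonempty E := ⟨0⟩
  obtain ⟨u, hu⟩ := TopologicalSpace.exists_dense_seq E
  have hcover : {s | c < ‖M s‖} ⊆ ⋃ n, {s | c * ‖u n‖ < ‖M s (u n)‖} := by
    intro s hs
    obtain ⟨_, ⟨n, rfl⟩, hn⟩ := (M s).exists_mem_mul_norm_lt_of_lt_opNorm hu hc hs
    exact Set.mem_iUnion.2 ⟨n, hn⟩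
  by_contra! h
  exact hM (measure_mono_null hcover (measure_iUnion_null fun n => h (u n)))

variable {p : ℝ≥0∞}

theorem memLp_clm_apply [TopologicalSpace.SeparableSpace E]
    (hM : ∀ x, StronglyMeasurable fun s => M s x) {C : ℝ} (hC : ∀ᵐ s ∂μ, ‖M s‖ ≤ C)
    (f : Lp E p μ) : MemLp (fun s => M s (f s)) p μ :=
  (Lp.memLp f).of_le_mul ((Lp.aestronglyMeasurable f).clm_apply_of_forall hM)
    (ae_norm_clm_apply_le hC f)

variable [Fact (1 ≤ p)]

def IsMultiplicationOperator (M : Ω → E →L[𝕜] F) (𝓜 : Lp E p μ →L[𝕜] Lp F p μ) : Prop :=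
  ∀ f : Lp E p μ, 𝓜 f =ᵐ[μ] fun s => M s (f s)

section Bounded

variable [TopologicalSpace.SeparableSpace E] (hM : ∀ x, StronglyMeasurable fun s => M s x)
  {C : ℝ} (hC : ∀ᵐ s ∂μ, ‖M s‖ ≤ C)
include hM hC

variable (p) in
noncomputable def mulOperator : Lp E p μ →L[𝕜] Lp F p μ :=
  LinearMap.mkContinuous
    { toFun := fun f => (memLp_clm_apply hM hC f).toLp
      map_add' := fun f g => by
        rw [← MemLp.toLp_add]
        refine MemLp.toLp_congr _ _ ?_
        filter_upwards [Lp.coeFn_add f g] with s hs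
        simp only [hs, Pi.add_apply, map_add]
      map_smul' := fun a f => by
        rw [← MemLp.toLp_const_smul]
        refine MemLp.toLp_congr _ _ ?_
        filter_upwards [Lp.coeFn_smul a f] with s hs
        simp only [hs, Pi.smul_apply, map_smul, RingHom.id_apply] }
    C fun f => Lp.norm_le_mul_norm_of_ae_le_mul <|
      (MemLp.coeFn_toLp (memLp_clm_apply hM hC f)).symm.rw (fun s y => ‖y‖ ≤ C * ‖f s‖)
        (ae_norm_clm_apply_le hC f)

theorem isMultiplicationOperator_mulOperator : IsMultiplicationOperator M (mulOperator p hM hC) :=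
  fun f => show ⇑(memLp_clm_apply hM hC f).toLp =ᵐ[μ] _ from MemLp.coeFn_toLp _

end Bounded

namespace IsMultiplicationOperator

variable {𝓜 : Lp E p μ →L[𝕜] Lp F p μ} (h𝓜 : IsMultiplicationOperator M 𝓜)
include h𝓜

theorem opNorm_le {C : ℝ} (hC0 : 0 ≤ C) (hC : ∀ᵐ s ∂μ, ‖M s‖ ≤ C) : ‖𝓜‖ ≤ C :=
  𝓜.opNorm_le_bound hC0 fun f => Lp.norm_le_mul_norm_of_ae_le_mul <|
    (h𝓜 f).symm.rw (fun s y => ‖y‖ ≤ C * ‖f s‖) (ae_norm_clm_apply_le hC f)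

variable [TopologicalSpace.SeparableSpace E]
  (hfsp : ∀ Y : Set Ω, MeasurableSet Y → 0 < μ Y →
    ∃ Z : Set Ω, MeasurableSet Z ∧ Z ⊆ Y ∧ 0 < μ Z ∧ μ Z < ⊤)
  (hM : ∀ x, StronglyMeasurable fun s => M s x)
include hfsp hM

theorem le_opNorm {c : ℝ} (hc : 0 ≤ c) (hpos : μ {s | c < ‖M s‖} ≠ 0) : c ≤ ‖𝓜‖ := by
  obtain ⟨x, hx⟩ := exists_measure_mul_norm_lt_norm_apply_ne_zero hc hpos
  have hx0 : x ≠ 0 := by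
    obtain ⟨s, hs⟩ := nonempty_of_measure_ne_zero hx
    rintro rfl
    simp at hs
  obtain ⟨Z, hZ, hZsub, hZpos, hZfin⟩ :=
    hfsp _ (measurableSet_lt measurable_const (hM x).norm.measurable) (pos_iff_ne_zero.2 hx)
  set f := indicatorConstLp p hZ hZfin.ne x
  have hf : 0 < ‖f‖ := by
    rw [norm_indicatorConstLp' (zero_lt_one.trans_le Fact.out).ne' hZpos.ne']
    have : 0 < μ.real Z := ENNReal.toReal_pos hZpos.ne' hZfin.ne
    positivity
  have hfZ : f =ᵐ[μ] Z.indicator fun _ => x := indicatorConstLp_coeFn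
  have hMf : c * ‖f‖ ≤ ‖𝓜 f‖ := by
    refine Lp.mul_norm_le_of_ae_mul_le hc ?_
    filter_upwards [h𝓜 f, hfZ] with s hMs hfs
    rw [hMs, hfs]
    by_cases hs : s ∈ Z
    · simpa [hs] using (hZsub hs).le
    · simp [hs]
  exact le_of_mul_le_mul_right (hMf.trans (𝓜.le_opNorm f)) hf

theorem ae_norm_le_opNorm : ∀ᵐ s ∂μ, ‖M s‖ ≤ ‖𝓜‖ := by
  have hε : ∀ n : ℕ, ∀ᵐ s ∂μ, ‖M s‖ ≤ ‖𝓜‖ + 1 / (n + 1) := fun n => by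
    have hlt : ‖𝓜‖ < ‖𝓜‖ + 1 / (n + 1) := lt_add_of_pos_right _ Nat.one_div_pos_of_nat
    simp only [ae_iff, not_le]
    by_contra hne
    exact hlt.not_ge (h𝓜.le_opNorm hfsp hM (by positivity) hne)
  filter_upwards [ae_all_iff.2 hε] with s hs
  exact ge_of_tendsto'
    (by simpa only [add_zero] using tendsto_one_div_add_atTop_nhds_zero_nat.const_add ‖𝓜‖) hs

theorem opNorm_eq_sInf : ‖𝓜‖ = sInf {C : ℝ | 0 ≤ C ∧ μ {s | C < ‖M s‖} = 0} := by
  have hleast : IsLeast {C : ℝ | 0 ≤ C ∧ μ {s | C < ‖M s‖} = 0} ‖𝓜‖ := by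
    refine ⟨⟨norm_nonneg _, ?_⟩, fun C ⟨hC0, hC⟩ => h𝓜.opNorm_le hC0 ?_⟩
    · simpa only [ae_iff, not_le] using h𝓜.ae_norm_le_opNorm hfsp hM
    · simpa only [ae_iff, not_le] using hC
  exact hleast.csInf_eq.symm

end IsMultiplicationOperator

end MeasureTheory

theorem stmt0_general {Ω X : Type*} [MeasurableSpace Ω] [NormedAddCommGroup X]
    [NormedSpace ℂ X] [TopologicalSpace.SeparableSpace X]
    (μ : Measure Ω)
    (hfsp : ∀ Y : Set Ω, MeasurableSet Y → 0 < μ Y →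
      ∃ Z : Set Ω, MeasurableSet Z ∧ Z ⊆ Y ∧ 0 < μ Z ∧ μ Z < ⊤)
    (p : ℝ≥0∞) [Fact (1 ≤ p)]
    (M : Ω → X →L[ℂ] X)
    (hM : ∀ x : X, StronglyMeasurable fun s => M s x) :
    ((∃ 𝓜 : Lp X p μ →L[ℂ] Lp X p μ,
        ∀ f : Lp X p μ, ∀ᵐ s ∂μ, (𝓜 f : Ω →ₘ[μ] X) s = M s ((f : Ω →ₘ[μ] X) s)) ↔
      ∃ C : ℝ, 0 ≤ C ∧ ∀ᵐ s ∂μ, ‖M s‖ ≤ C) ∧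
    (∀ 𝓜 : Lp X p μ →L[ℂ] Lp X p μ,
      (∀ f : Lp X p μ, ∀ᵐ s ∂μ, (𝓜 f : Ω →ₘ[μ] X) s = M s ((f : Ω →ₘ[μ] X) s)) →
      ‖𝓜‖ = sInf {C : ℝ | 0 ≤ C ∧ μ {s | C < ‖M s‖} = 0}) :=
  ⟨⟨fun ⟨𝓜, h𝓜⟩ => ⟨‖𝓜‖, norm_nonneg _,
      IsMultiplicationOperator.ae_norm_le_opNorm (M := M) h𝓜 hfsp hM⟩,
    fun ⟨_, _, hC⟩ => ⟨mulOperator p hM hC, isMultiplicationOperator_mulOperator hM hC⟩⟩,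
    fun _ h𝓜 => IsMultiplicationOperator.opNorm_eq_sInf (M := M) h𝓜 hfsp hM⟩

/-- For a multiplication operator `𝓜` on `L^p(Ω,X)` induced by a
pointwise family `M : Ω → L(X)`, `𝓜` is bounded (i.e. extends to a bounded operator on
all of `L^p`) iff `s ↦ ‖M s‖` is essentially bounded, and in that case
`‖𝓜‖ = ess sup ‖M(s)‖`. -/
theorem stmt0 {Ω X : Type*} [MeasurableSpace Ω] [NormedAddCommGroup X]
    [NormedSpace ℂ X] [CompleteSpace X] [TopologicalSpace.SeparableSpace X]
    (μ : Measure Ω) [SigmaFinite μ]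
    (hfsp : ∀ Y : Set Ω, MeasurableSet Y → 0 < μ Y →
      ∃ Z : Set Ω, MeasurableSet Z ∧ Z ⊆ Y ∧ 0 < μ Z ∧ μ Z < ⊤)
    (p : ℝ≥0∞) [Fact (1 ≤ p)]
    (M : Ω → X →L[ℂ] X)
    (hM : ∀ x : X, StronglyMeasurable fun s => M s x) :
    ((∃ 𝓜 : Lp X p μ →L[ℂ] Lp X p μ,
        ∀ f : Lp X p μ, ∀ᵐ s ∂μ, (𝓜 f : Ω →ₘ[μ] X) s = M s ((f : Ω →ₘ[μ] X) s)) ↔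
      ∃ C : ℝ, 0 ≤ C ∧ ∀ᵐ s ∂μ, ‖M s‖ ≤ C) ∧
    (∀ 𝓜 : Lp X p μ →L[ℂ] Lp X p μ,
      (∀ f : Lp X p μ, ∀ᵐ s ∂μ, (𝓜 f : Ω →ₘ[μ] X) s = M s ((f : Ω →ₘ[μ] X) s)) →
      ‖𝓜‖ = sInf {C : ℝ | 0 ≤ C ∧ μ {s | C < ‖M s‖} = 0}) :=
  stmt0_general μ hfsp p M hM
end

section
/- Let M: Ω → L(X) induce a multiplication operator 𝓜 on L^p(Ω,X), where (Ω,Σ,μ) is σ-finite with the finite subset property and X is separable. If there exist K ≥ 0 and a measurable set N ⊆ Ω with μ(N) > 0 such that ‖M(s)‖ > K for all s ∈ N, then ‖𝓜‖ > K. -/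
open MeasureTheory ENNReal

/-! Since `X` is separable, `K < ‖M s‖` is witnessed on a fixed dense sequence `u` with a rational
margin: `q * ‖u n‖ < ‖M s (u n)‖` for some `n` and some rational `q > K`. So `N` is covered by
countably many measurable sets, one of which meets `N` in positive measure; on a piece `Z` of it
of finite positive measure, `𝓜` stretches the indicator of `Z` times `u n` by at least `q`. -/

theorem ContinuousLinearMap.exists_rat_mul_norm_lt_norm_apply_of_denseRange
    {𝕜 E F ι : Type*} [NontriviallyNormedField 𝕜] [NormedAddCommGroup E] [NormedSpace 𝕜 E]
    [NormedAddCommGroup F] [NormedSpace 𝕜 F] (T : E →L[𝕜] F) {u : ι → E} (hu : DenseRange u)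
    {K : ℝ} (hK : 0 ≤ K) (hKT : K < ‖T‖) :
    ∃ n, ∃ q : ℚ, K < q ∧ q * ‖u n‖ < ‖T (u n)‖ := by
  obtain ⟨q, hKq, hqT⟩ := exists_rat_btwn hKT
  obtain ⟨x, hx⟩ := T.exists_mul_lt_of_lt_opNorm (hK.trans hKq.le) hqT
  obtain ⟨n, hn⟩ := hu.exists_mem_open (s := {y | q * ‖y‖ < ‖T y‖})
    (isOpen_lt (by fun_prop) (by fun_prop)) ⟨x, hx⟩
  exact ⟨n, q, hKq, hn⟩

theorem MeasureTheory.Lp.mul_norm_le_norm_of_ae_mul_le {α E F : Type*} {m : MeasurableSpace α}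
    {p : ℝ≥0∞} {μ : Measure α} [NormedAddCommGroup E] [NormedAddCommGroup F]
    {c : ℝ} {f : Lp E p μ} {g : Lp F p μ}
    (h : ∀ᵐ x ∂μ, c * ‖f x‖ ≤ ‖g x‖) : c * ‖f‖ ≤ ‖g‖ := by
  rcases le_or_gt c 0 with hc | hc
  · simp only [Lp.norm_def]
    exact (mul_nonpos_of_nonpos_of_nonneg hc toReal_nonneg).trans toReal_nonneg
  rw [← le_inv_mul_iff₀ hc]
  exact Lp.norm_le_mul_norm_of_ae_le_mul (h.mono fun x hx => (le_inv_mul_iff₀ hc).2 hx)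

theorem MeasureTheory.mul_norm_indicatorConstLp_le_of_ae_eq_apply
    {Ω 𝕜 X Y : Type*} [MeasurableSpace Ω] {μ : Measure Ω} {p : ℝ≥0∞} [NormedField 𝕜]
    [NormedAddCommGroup X] [NormedSpace 𝕜 X] [NormedAddCommGroup Y] [NormedSpace 𝕜 Y]
    {M : Ω → X →L[𝕜] Y} {Z : Set Ω} (hZ : MeasurableSet Z) (hZfin : μ Z ≠ ⊤) {x : X}
    {c : ℝ} (hMx : ∀ s ∈ Z, c * ‖x‖ ≤ ‖M s x‖) {g : Lp Y p μ}
    (hg : ∀ᵐ s ∂μ, g s = M s (indicatorConstLp p hZ hZfin x s)) :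
    c * ‖indicatorConstLp p hZ hZfin x‖ ≤ ‖g‖ := by
  refine Lp.mul_norm_le_norm_of_ae_mul_le ?_
  filter_upwards [hg, indicatorConstLp_coeFn (hs := hZ) (hμs := hZfin) (c := x)] with s hgs hfs
  rw [hgs, hfs]
  by_cases hs : s ∈ Z
  · simpa [Set.indicator_of_mem hs] using hMx s hs
  · simp [Set.indicator_of_notMem hs]

theorem stmt1_general {Ω X : Type*} [MeasurableSpace Ω] [NormedAddCommGroup X]
    [NormedSpace ℂ X] [TopologicalSpace.SeparableSpace X]
    (μ : Measure Ω)
    (hfsp : ∀ Y : Set Ω, MeasurableSet Y → 0 < μ Y →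
      ∃ Z : Set Ω, MeasurableSet Z ∧ Z ⊆ Y ∧ 0 < μ Z ∧ μ Z < ⊤)
    (p : ℝ≥0∞) [Fact (1 ≤ p)]
    (M : Ω → X →L[ℂ] X)
    (hM : ∀ x : X, StronglyMeasurable fun s => M s x)
    (𝓜 : Lp X p μ →L[ℂ] Lp X p μ)
    (h𝓜 : ∀ f : Lp X p μ, ∀ᵐ s ∂μ, (𝓜 f : Ω →ₘ[μ] X) s = M s ((f : Ω →ₘ[μ] X) s))
    (K : ℝ) (hK : 0 ≤ K) (N : Set Ω) (hNmeas : MeasurableSet N) (hNpos : 0 < μ N)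
    (hKN : ∀ s ∈ N, K < ‖M s‖) :
    K < ‖𝓜‖ := by
  set u := TopologicalSpace.denseSeq X
  let A : ℕ × ℚ → Set Ω := fun i => {s | K < i.2 ∧ i.2 * ‖u i.1‖ < ‖M s (u i.1)‖}
  have hNA : N ⊆ ⋃ i, A i := fun s hs => by
    obtain ⟨n, q, h⟩ := (M s).exists_rat_mul_norm_lt_norm_apply_of_denseRange
      (TopologicalSpace.denseRange_denseSeq X) hK (hKN s hs)
    exact Set.mem_iUnion.2 ⟨(n, q), h⟩
  obtain ⟨⟨n, q⟩, hpos⟩ : ∃ i, 0 < μ (N ∩ A i) := by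
    refine exists_measure_pos_of_not_measure_iUnion_null ?_
    rw [← Set.inter_iUnion, Set.inter_eq_left.2 hNA]
    exact hNpos.ne'
  have hA : MeasurableSet (A (n, q)) :=
    (MeasurableSet.const _).inter (measurableSet_lt measurable_const (hM (u n)).norm.measurable)
  obtain ⟨Z, hZ, hZN, hZpos, hZfin⟩ := hfsp _ (hNmeas.inter hA) hpos
  obtain ⟨s, hs⟩ := nonempty_of_measure_ne_zero hZpos.ne'
  obtain ⟨hKq, hqs⟩ := (hZN hs).2
  have hun : u n ≠ 0 := fun h => by simp [h] at hqs
  set f := indicatorConstLp p hZ hZfin.ne (u n)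
  have hf : 0 < ‖f‖ := by
    rw [norm_indicatorConstLp' (one_pos.trans_le Fact.out).ne' hZpos.ne']
    have : 0 < μ.real Z := ENNReal.toReal_pos hZpos.ne' hZfin.ne
    positivity
  have hMf : (q : ℝ) * ‖f‖ ≤ ‖𝓜 f‖ :=
    mul_norm_indicatorConstLp_le_of_ae_eq_apply hZ hZfin.ne
      (fun t ht => (hZN ht).2.2.le) (h𝓜 f)
  exact hKq.trans_le (le_of_mul_le_mul_right (hMf.trans (𝓜.le_opNorm f)) hf)

/-- If `𝓜` is a bounded multiplication operator on `L^p(Ω,X)` induced by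
`M : Ω → L(X)` and `‖M s‖ > K` on a set `N` of positive measure, then `‖𝓜‖ > K`. -/
theorem stmt1 {Ω X : Type*} [MeasurableSpace Ω] [NormedAddCommGroup X]
    [NormedSpace ℂ X] [CompleteSpace X] [TopologicalSpace.SeparableSpace X]
    (μ : Measure Ω) [SigmaFinite μ]
    (hfsp : ∀ Y : Set Ω, MeasurableSet Y → 0 < μ Y →
      ∃ Z : Set Ω, MeasurableSet Z ∧ Z ⊆ Y ∧ 0 < μ Z ∧ μ Z < ⊤)
    (p : ℝ≥0∞) [Fact (1 ≤ p)] (hp : p ≠ ⊤)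
    (M : Ω → X →L[ℂ] X)
    (hM : ∀ x : X, StronglyMeasurable fun s => M s x)
    (𝓜 : Lp X p μ →L[ℂ] Lp X p μ)
    (h𝓜 : ∀ f : Lp X p μ, ∀ᵐ s ∂μ, (𝓜 f : Ω →ₘ[μ] X) s = M s ((f : Ω →ₘ[μ] X) s))
    (K : ℝ) (hK : 0 ≤ K) (N : Set Ω) (hNmeas : MeasurableSet N) (hNpos : 0 < μ N)
    (hKN : ∀ s ∈ N, K < ‖M s‖) :
    K < ‖𝓜‖ :=
  stmt1_general μ hfsp p M hM 𝓜 h𝓜 K hK N hNmeas hNpos hKN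
end
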